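/- Let (X, d) be a metric space with a Borel probability measure μ and let f : X → X be an invertible Borel measurable μ-preserving map whose inverse is also Borel measurable and μ-preserving. If W^ss and W^su are jointly ergodic, then f is totally ergodic, i.e. fⁿ is ergodic for every integer n ≥ 1. -/

import Mathlib

open MeasureTheory Filter Topology
open scoped ENNReal

/-- The strong stable set of `x` under `f`. -/
def Wss {X : Type*} [MetricSpace X] (f : X → X) (x : X) : Set X :=
  {y | Tendsto (fun n : ℕ => dist (f^[n] x) (f^[n] y)) atTop (nhds 0)}

/-- `φ` is saturated with respect to the partition `W`. -/
def Saturated {X : Type*} [MeasurableSpace X] (μ : Measure X)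
    (W : X → Set X) (φ : X → ℝ) : Prop :=
  ∃ G : Set X, MeasurableSet G ∧ μ G = 1 ∧
    ∀ x ∈ G, ∀ y ∈ G, y ∈ W x → φ x = φ y

/-- Two partitions `Ws`, `Wu` are jointly ergodic if every `φ ∈ L²(μ)` saturated with
respect to both of them is constant a.e. -/
def JointlyErgodic {X : Type*} [MeasurableSpace X] (μ : Measure X)
    (Ws Wu : X → Set X) : Prop :=
  ∀ φ : X → ℝ, Measurable φ → MemLp φ 2 μ →
    Saturated μ Ws φ → Saturated μ Wu φ → ∃ c : ℝ, φ =ᵐ[μ] fun _ => c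

/-- `f` is ergodic: every measurable a.e.-invariant function is constant a.e. -/
def ErgodicMap {X : Type*} [MeasurableSpace X] (μ : Measure X) (f : X → X) : Prop :=
  ∀ φ : X → ℝ, Measurable φ → φ ∘ f =ᵐ[μ] φ → ∃ c : ℝ, φ =ᵐ[μ] fun _ => c

/-!
Hopf argument. A `g`-invariant `ψ ∈ L²` is its own orthogonal projection onto the subspace of
`g`-invariant classes. For uniformly continuous `u`, the Birkhoff averages of `u` converge in `L²`
to the projection of `u` (von Neumann), hence a.e. along a subsequence; since
`u (gᵏ x) - u (gᵏ y) → 0` for `y ∈ Wss g x`, the limit is `Wss g`-saturated. Uniformly continuous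
functions are dense in `L²` and saturated classes form a closed set, so the projection of every
class, `ψ` in particular, is saturated. For `g = fⁿ` and `g = f⁻ⁿ`, whose stable sets contain
those of `f` and `f⁻¹`, an `fⁿ`-invariant function (made bounded by `arctan`) is thus saturated
for both partitions, hence constant.
-/

section StableSets

variable {X : Type*} [MetricSpace X] {g : X → X}

theorem Wss_subset_Wss_iterate {n : ℕ} (hn : 0 < n) (x : X) :
    Wss g x ⊆ Wss (g^[n]) x := fun _ hy => by
  simpa [Wss, Function.comp_def, ← Function.iterate_mul] using
    hy.comp (tendsto_id.const_mul_atTop' hn)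

theorem UniformContinuous.tendsto_birkhoffAverage_sub_of_mem_Wss {u : X → ℝ}
    (hu : UniformContinuous u) {x y : X} (hxy : y ∈ Wss g x) :
    Tendsto (fun N => birkhoffAverage ℝ g u N x - birkhoffAverage ℝ g u N y) atTop (𝓝 0) := by
  have horbit : Tendsto (fun k => u (g^[k] x) - u (g^[k] y)) atTop (𝓝 0) := by
    have := Tendsto.comp hu
      ((tendsto_uniformity_iff_dist_tendsto_zero (f := fun k => (g^[k] x, g^[k] y))).2 hxy)
    rw [tendsto_uniformity_iff_dist_tendsto_zero] at this
    simpa [tendsto_zero_iff_norm_tendsto_zero, Real.dist_eq] using this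
  simpa [birkhoffAverage, birkhoffSum, mul_sub, Finset.sum_sub_distrib]
    using horbit.cesaro_smul

end StableSets

section Saturated

variable {X : Type*} [MeasurableSpace X] {μ : Measure X} {W : X → Set X}

theorem Saturated.mono {W' : X → Set X} {φ : X → ℝ} (h : Saturated μ W φ)
    (hW : ∀ x, W' x ⊆ W x) : Saturated μ W' φ := by
  obtain ⟨G, hGm, hG1, hG⟩ := h
  exact ⟨G, hGm, hG1, fun x hx y hy hxy => hG x hx y hy (hW x hxy)⟩

variable [IsProbabilityMeasure μ]

theorem saturated_iff_exists_mem_ae {φ : X → ℝ} :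
    Saturated μ W φ ↔ ∃ G ∈ ae μ, ∀ x ∈ G, ∀ y ∈ G, y ∈ W x → φ x = φ y := by
  constructor
  · rintro ⟨G, hGm, hG1, hG⟩
    exact ⟨G, (mem_ae_iff_prob_eq_one hGm).2 hG1, hG⟩
  · rintro ⟨G, hG, hsat⟩
    obtain ⟨T, hT, hTm, hTG⟩ := Eventually.exists_measurable_mem hG
    exact ⟨T, hTm, (mem_ae_iff_prob_eq_one hTm).1 hT,
      fun x hx y hy => hsat x (hTG x hx) y (hTG y hy)⟩

theorem Saturated.congr_ae {φ ψ : X → ℝ} (h : Saturated μ W φ) (hφψ : φ =ᵐ[μ] ψ) :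
    Saturated μ W ψ := by
  obtain ⟨G, hG, hsat⟩ := saturated_iff_exists_mem_ae.1 h
  refine saturated_iff_exists_mem_ae.2 ⟨G ∩ {x | φ x = ψ x}, inter_mem hG hφψ, ?_⟩
  rintro x ⟨hxG, hx : φ x = ψ x⟩ y ⟨hyG, hy : φ y = ψ y⟩ hxy
  rw [← hx, ← hy]
  exact hsat x hxG y hyG hxy

theorem saturated_of_tendsto_ae {φs : ℕ → X → ℝ} {φ : X → ℝ}
    (hlim : ∀ᵐ x ∂μ, Tendsto (φs · x) atTop (𝓝 (φ x)))
    (hasymp : ∃ G ∈ ae μ, ∀ x ∈ G, ∀ y ∈ G, y ∈ W x →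
      Tendsto (fun n => φs n x - φs n y) atTop (𝓝 0)) :
    Saturated μ W φ := by
  obtain ⟨G, hG, hasymp⟩ := hasymp
  refine saturated_iff_exists_mem_ae.2
    ⟨G ∩ {x | Tendsto (φs · x) atTop (𝓝 (φ x))}, inter_mem hG hlim, ?_⟩
  rintro x ⟨hxG, hx⟩ y ⟨hyG, hy : Tendsto (φs · y) atTop (𝓝 (φ y))⟩ hxy
  refine tendsto_nhds_unique hx ?_
  simpa using hy.add (hasymp x hxG y hyG hxy)

theorem saturated_of_tendsto_Lp {p : ℝ≥0∞} [Fact (1 ≤ p)] {F : ℕ → Lp ℝ p μ} {F₀ : Lp ℝ p μ}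
    (hF : Tendsto F atTop (𝓝 F₀)) {φs : ℕ → X → ℝ} (hφs : ∀ n, F n =ᵐ[μ] φs n)
    (hasymp : ∃ G ∈ ae μ, ∀ x ∈ G, ∀ y ∈ G, y ∈ W x →
      Tendsto (fun n => φs n x - φs n y) atTop (𝓝 0)) :
    Saturated μ W F₀ := by
  obtain ⟨ns, hns, hlim⟩ := (tendstoInMeasure_of_tendsto_Lp hF).exists_seq_tendsto_ae
  obtain ⟨G, hG, hasymp⟩ := hasymp
  refine saturated_of_tendsto_ae (φs := fun i => φs (ns i)) ?_
    ⟨G, hG, fun x hx y hy hxy => (hasymp x hx y hy hxy).comp hns.tendsto_atTop⟩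
  filter_upwards [hlim, ae_all_iff.2 fun i => hφs (ns i)] with x hx hxs
  simpa only [hxs] using hx

theorem isClosed_setOf_saturated {p : ℝ≥0∞} [Fact (1 ≤ p)] :
    IsClosed {F : Lp ℝ p μ | Saturated μ W F} := by
  refine isSeqClosed_iff_isClosed.1 fun F F₀ hF hlim => ?_
  choose G hG hsat using fun n => saturated_iff_exists_mem_ae.1 (hF n)
  refine saturated_of_tendsto_Lp hlim (fun n => ae_eq_refl _)
    ⟨⋂ n, G n, countable_iInter_mem.2 hG, fun x hx y hy hxy => ?_⟩
  simp only [Set.mem_iInter] at hx hy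
  simp [hsat _ x (hx _) y (hy _) hxy]

end Saturated

section Koopman

variable {X : Type*} [MeasurableSpace X] {μ : Measure X} {g : X → X}

noncomputable def koopman (hg : MeasurePreserving g μ μ) : Lp ℝ 2 μ →L[ℝ] Lp ℝ 2 μ :=
  (Lp.compMeasurePreservingₗᵢ ℝ g hg).toContinuousLinearMap

theorem norm_koopman_le (hg : MeasurePreserving g μ μ) : ‖koopman hg‖ ≤ 1 :=
  LinearIsometry.norm_toContinuousLinearMap_le _

theorem koopman_iterate (hg : MeasurePreserving g μ μ) (k : ℕ) :
    (⇑(koopman hg))^[k] = ⇑(Lp.compMeasurePreserving (g^[k]) (hg.iterate k)) :=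
  Lp.compMeasurePreserving_iterate hg k

theorem coeFn_birkhoffAverage_koopman (hg : MeasurePreserving g μ μ) {F : Lp ℝ 2 μ}
    {u : X → ℝ} (hF : F =ᵐ[μ] u) (N : ℕ) :
    ⇑(birkhoffAverage ℝ (koopman hg) id N F) =ᵐ[μ] birkhoffAverage ℝ g u N := by
  have hsum : ∀ N, ⇑(birkhoffSum (koopman hg) id N F) =ᵐ[μ] birkhoffSum g u N := by
    intro N
    induction N with
    | zero => simpa using Lp.coeFn_zero ℝ 2 μ
    | succ N ih =>
      have hiter : ⇑((koopman hg)^[N] F) =ᵐ[μ] u ∘ g^[N] := by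
        rw [koopman_iterate]
        exact (Lp.coeFn_compMeasurePreserving _ _).trans
          ((hg.iterate N).quasiMeasurePreserving.ae_eq_comp hF)
      filter_upwards [Lp.coeFn_add (birkhoffSum (koopman hg) id N F) ((koopman hg)^[N] F),
        ih, hiter] with x hadd hN hk
      simp only [birkhoffSum_succ, id]
      rw [hadd, Pi.add_apply, hN, hk, Function.comp_apply]
  filter_upwards [Lp.coeFn_smul ((N : ℝ)⁻¹) (birkhoffSum (koopman hg) id N F), hsum N]
    with x hsmul hN
  simp [birkhoffAverage, hsmul, hN]

theorem koopman_toLp_eq_self (hg : MeasurePreserving g μ μ) {ψ : X → ℝ} (hψ : MemLp ψ 2 μ)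
    (hinv : ψ ∘ g =ᵐ[μ] ψ) : koopman hg (hψ.toLp ψ) = hψ.toLp ψ :=
  (MemLp.toLp_eq_toLp_iff (hψ.comp_measurePreserving hg) hψ).2 hinv

end Koopman

section Density

variable {X : Type*} [PseudoMetricSpace X]

theorem norm_mul_thickenedIndicator_sub_indicator_le {δ : ℝ} (hδ : 0 < δ) (E : Set X) (c : ℝ)
    (x : X) :
    ‖c * thickenedIndicator hδ E x - E.indicator (fun _ => c) x‖ ≤
      ‖(Metric.thickening δ E).indicator (fun _ => c) x - E.indicator (fun _ => c) x‖ := by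
  by_cases hE : x ∈ E
  · simp [hE, thickenedIndicator_one hδ E hE, Metric.self_subset_thickening hδ E hE]
  by_cases hT : x ∈ Metric.thickening δ E
  · simpa [hE, hT, abs_mul] using
      mul_le_of_le_one_right (abs_nonneg c) (thickenedIndicator_le_one hδ E x)
  · simp [hE, hT, thickenedIndicator_zero hδ E hT]

variable [MeasurableSpace X] (p : ℝ≥0∞) [Fact (1 ≤ p)] (μ : Measure X)

def uniformlyContinuousLp : Submodule ℝ (Lp ℝ p μ) where
  carrier := {F | ∃ u : X → ℝ, UniformContinuous u ∧ F =ᵐ[μ] u}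
  add_mem' := by
    rintro F G ⟨u, hu, hFu⟩ ⟨v, hv, hGv⟩
    exact ⟨u + v, hu.add hv, (Lp.coeFn_add F G).trans (hFu.add hGv)⟩
  zero_mem' := ⟨0, uniformContinuous_const, Lp.coeFn_zero ℝ p μ⟩
  smul_mem' := by
    rintro c F ⟨u, hu, hFu⟩
    exact ⟨c • u, hu.const_smul c, (Lp.coeFn_smul c F).trans (hFu.const_smul c)⟩

variable {p μ} [IsFiniteMeasure μ]

theorem tendsto_measure_symmDiff_thickening_of_isClosed [OpensMeasurableSpace X] {F : Set X}
    (hF : IsClosed F) :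
    Tendsto (fun r => μ (symmDiff (Metric.thickening r F) F)) (𝓝[>] 0) (𝓝 0) := by
  have hμ := ENNReal.Tendsto.sub
    (tendsto_measure_thickening_of_isClosed ⟨1, one_pos, measure_ne_top μ _⟩ hF)
    tendsto_const_nhds (Or.inr (measure_ne_top μ F))
  rw [tsub_self] at hμ
  refine hμ.congr' (eventually_mem_nhdsWithin.mono fun r (hr : 0 < r) => ?_)
  dsimp only
  rw [symmDiff_of_ge (Metric.self_subset_thickening hr F),
    measure_sdiff (Metric.self_subset_thickening hr F) hF.nullMeasurableSet (measure_ne_top μ F)]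

variable [BorelSpace X]

theorem indicatorConstLp_mem_topologicalClosure_of_isClosed (hp : p ≠ ∞) {F : Set X}
    (hF : IsClosed F) (c : ℝ) :
    indicatorConstLp p hF.measurableSet (measure_ne_top μ F) c ∈
      (uniformlyContinuousLp p μ).topologicalClosure := by
  set r : ℕ → ℝ := fun n => 1 / (n + 1)
  have hr : ∀ n, 0 < r n := fun n => Nat.one_div_pos_of_nat
  have hr0 : Tendsto r atTop (𝓝[>] 0) :=
    tendsto_nhdsWithin_iff.2 ⟨tendsto_one_div_add_atTop_nhds_zero_nat, .of_forall hr⟩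
  set θ : ℕ → X → ℝ := fun n x => c * thickenedIndicator (hr n) F x
  have hθuc : ∀ n, UniformContinuous (θ n) := fun n =>
    (uniformContinuous_subtype_val.comp
      (lipschitzWith_thickenedIndicator (hr n) F).uniformContinuous).const_smul c
  have hθLp : ∀ n, MemLp (θ n) p μ := fun n =>
    .of_bound (hθuc n).continuous.aestronglyMeasurable |c| (.of_forall fun x => by
      simpa [θ, abs_mul] using
        mul_le_of_le_one_right (abs_nonneg c) (thickenedIndicator_le_one (hr n) F x))
  have hthick : Tendsto (fun n => μ (symmDiff (Metric.thickening (r n) F) F)) atTop (𝓝 0) :=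
    (tendsto_measure_symmDiff_thickening_of_isClosed hF).comp hr0
  have hind := tendsto_indicatorConstLp_set (c := c) (hs := hF.measurableSet)
    (hμs := measure_ne_top μ F) (ht := fun n => Metric.isOpen_thickening.measurableSet)
    (hμt := fun n => measure_ne_top μ _) hp hthick
  have hlim : Tendsto (fun n => (hθLp n).toLp (θ n)) atTop
      (𝓝 (indicatorConstLp p hF.measurableSet (measure_ne_top μ F) c)) := by
    rw [tendsto_iff_edist_tendsto_0] at hind ⊢
    refine tendsto_of_tendsto_of_tendsto_of_le_of_le tendsto_const_nhds hind (fun n => zero_le)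
      fun n => ?_
    simp only [indicatorConstLp, Lp.edist_toLp_toLp]
    exact eLpNorm_mono fun x => norm_mul_thickenedIndicator_sub_indicator_le (hr n) F c x
  exact isClosed_closure.mem_of_tendsto hlim (.of_forall fun n =>
    Submodule.le_topologicalClosure _ ⟨θ n, hθuc n, (hθLp n).coeFn_toLp⟩)

theorem indicatorConstLp_mem_topologicalClosure (hp : p ≠ ∞) {s : Set X} (hs : MeasurableSet s)
    (c : ℝ) :
    indicatorConstLp p hs (measure_ne_top μ s) c ∈
      (uniformlyContinuousLp p μ).topologicalClosure := by
  have hε : ∀ n : ℕ, (n : ℝ≥0∞)⁻¹ ≠ 0 := fun n => ENNReal.inv_ne_zero.2 (ENNReal.natCast_ne_top n)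
  choose F hFs hF hμF using fun n => hs.exists_isClosed_sdiff_lt (measure_ne_top μ s) (hε n)
  have hsymm : Tendsto (fun n => μ (symmDiff (F n) s)) atTop (𝓝 0) := by
    refine tendsto_of_tendsto_of_tendsto_of_le_of_le tendsto_const_nhds
      ENNReal.tendsto_inv_nat_nhds_zero (fun n => zero_le) fun n => ?_
    rw [symmDiff_of_le (hFs n)]
    exact (hμF n).le
  exact isClosed_closure.mem_of_tendsto (tendsto_indicatorConstLp_set hp hsymm)
    (.of_forall fun n => indicatorConstLp_mem_topologicalClosure_of_isClosed hp (hF n) c)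

theorem dense_uniformlyContinuousLp (hp : p ≠ ∞) :
    Dense (uniformlyContinuousLp p μ : Set (Lp ℝ p μ)) := by
  suffices h : ∀ F : Lp ℝ p μ, F ∈ (uniformlyContinuousLp p μ).topologicalClosure from
    Submodule.dense_iff_topologicalClosure_eq_top.2 (eq_top_iff.2 fun F _ => h F)
  intro F
  induction F using Lp.induction hp with
  | indicatorConst c hs hμs =>
    simpa [Lp.simpleFunc.coe_indicatorConst] using indicatorConstLp_mem_topologicalClosure hp hs c
  | add _ _ _ hf hg => exact add_mem hf hg
  | isClosed => exact Submodule.isClosed_topologicalClosure _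

end Density

section Hopf

variable {X : Type*} [MetricSpace X] [MeasurableSpace X] {μ : Measure X}
  [IsProbabilityMeasure μ] {g : X → X}

theorem saturated_starProjection_koopman (hg : MeasurePreserving g μ μ) {F : Lp ℝ 2 μ}
    {u : X → ℝ} (hu : UniformContinuous u) (hFu : F =ᵐ[μ] u) :
    Saturated μ (Wss g) (((koopman hg).eqLocus (1 : Lp ℝ 2 μ →L[ℝ] Lp ℝ 2 μ)).starProjection F) :=
  saturated_of_tendsto_Lp
    ((koopman hg).tendsto_birkhoffAverage_orthogonalProjection (norm_koopman_le hg) F)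
    (coeFn_birkhoffAverage_koopman hg hFu)
    ⟨Set.univ, univ_mem, fun _ _ _ _ hxy => hu.tendsto_birkhoffAverage_sub_of_mem_Wss hxy⟩

theorem saturated_of_comp_ae_eq [BorelSpace X] (hg : MeasurePreserving g μ μ) {ψ : X → ℝ}
    (hψ : MemLp ψ 2 μ) (hinv : ψ ∘ g =ᵐ[μ] ψ) : Saturated μ (Wss g) ψ := by
  set K := (koopman hg).eqLocus (1 : Lp ℝ 2 μ →L[ℝ] Lp ℝ 2 μ)
  have hK : ∀ F, Saturated μ (Wss g) (K.starProjection F) :=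
    (dense_uniformlyContinuousLp (p := 2) ENNReal.ofNat_ne_top).induction
      (fun _ ⟨_, hu, hFu⟩ => saturated_starProjection_koopman hg hu hFu)
      (isClosed_setOf_saturated.preimage K.starProjection.continuous)
  have hψK : hψ.toLp ψ ∈ K := koopman_toLp_eq_self hg hψ hinv
  have hψsat := hK (hψ.toLp ψ)
  rw [Submodule.starProjection_eq_self_iff.2 hψK] at hψsat
  exact hψsat.congr_ae hψ.coeFn_toLp

end Hopf

section Ergodic

variable {X : Type*} [MeasurableSpace X] {μ : Measure X}

theorem comp_ae_eq_of_rightInverse {β : Type*} {g h : X → X}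
    (hh : Measure.QuasiMeasurePreserving h μ μ) (hgh : Function.RightInverse h g) {ψ : X → β}
    (hinv : ψ ∘ g =ᵐ[μ] ψ) : ψ ∘ h =ᵐ[μ] ψ := by
  simpa [Function.comp_assoc, hgh.comp_eq_id] using (hh.ae_eq_comp hinv).symm

theorem ErgodicMap.of_memLp [IsFiniteMeasure μ] {g : X → X}
    (h : ∀ ψ : X → ℝ, Measurable ψ → MemLp ψ 2 μ → ψ ∘ g =ᵐ[μ] ψ → ∃ c : ℝ, ψ =ᵐ[μ] fun _ => c) :
    ErgodicMap μ g := by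
  intro φ hφ hinv
  have hψm : Measurable (Real.arctan ∘ φ) := Real.continuous_arctan.measurable.comp hφ
  have hψ : MemLp (Real.arctan ∘ φ) 2 μ := .of_bound hψm.aestronglyMeasurable (Real.pi / 2)
    (.of_forall fun x => (abs_lt.2 (Real.arctan_mem_Ioo (φ x))).le)
  obtain ⟨c, hc⟩ := h _ hψm hψ <| by
    filter_upwards [hinv] with x hx
    simp only [Function.comp_apply] at hx ⊢
    rw [hx]
  refine ⟨Real.tan c, ?_⟩
  filter_upwards [hc] with x hx
  rw [← hx, Function.comp_apply, Real.tan_arctan]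

end Ergodic

theorem totallyErgodic_of_jointlyErgodic_general {X : Type*} [MetricSpace X] [MeasurableSpace X] [BorelSpace X]
    (μ : Measure X) [IsProbabilityMeasure μ]
    (f finv : X → X) (hf : MeasurePreserving f μ μ) (hfinv : MeasurePreserving finv μ μ)
    (hri : Function.RightInverse finv f)
    (hje : JointlyErgodic μ (Wss f) (Wss finv)) :
    ∀ n : ℕ, 1 ≤ n → ErgodicMap μ (f^[n]) := by
  intro n hn
  refine ErgodicMap.of_memLp fun ψ hψm hψ hinv => hje ψ hψm hψ ?_ ?_
  · exact (saturated_of_comp_ae_eq (hf.iterate n) hψ hinv).mono (Wss_subset_Wss_iterate hn)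
  · have hinv' : ψ ∘ finv^[n] =ᵐ[μ] ψ :=
      comp_ae_eq_of_rightInverse (hfinv.iterate n).quasiMeasurePreserving (hri.iterate n) hinv
    exact (saturated_of_comp_ae_eq (hfinv.iterate n) hψ hinv').mono (Wss_subset_Wss_iterate hn)

/-- If the stable and unstable partitions are jointly ergodic, then `f` is totally ergodic:
`fⁿ` is ergodic for every `n ≥ 1`. -/
theorem totallyErgodic_of_jointlyErgodic {X : Type*} [MetricSpace X] [MeasurableSpace X] [BorelSpace X]
    (μ : Measure X) [IsProbabilityMeasure μ]
    (f finv : X → X) (hf : MeasurePreserving f μ μ) (hfinv : MeasurePreserving finv μ μ)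
    (hli : Function.LeftInverse finv f) (hri : Function.RightInverse finv f)
    (hje : JointlyErgodic μ (Wss f) (Wss finv)) :
    ∀ n : ℕ, 1 ≤ n → ErgodicMap μ (f^[n]) :=
  totallyErgodic_of_jointlyErgodic_general μ f finv hf hfinv hri hje
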